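/- Let I = [α_I, α'_I) and J = [α_J, α'_J) be bounded half-open intervals with α'_I = α_J (adjacent) and compatible cutoff radii: ε'_I = ε_J, ε_I + ε'_I ≤ |I| and ε_J + ε'_J ≤ |J|. Then 𝒫_I + 𝒫_J = 𝒫_{I∪J} as operators on L²(ℝ; ℂ), where I∪J = [α_I, α'_J) carries the cutoff radii ε_I at its left endpoint and ε'_J at its right endpoint. -/

import Mathlib

/-!
On the Fourier side `𝒫_I` multiplies by `b_I` and folds `b_I · 𝓕f` evenly about `α_I` and
oddly about `α'_I`, so the claim is a pointwise identity between bell functions. Since `ρ`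
is `0` or `1` off `[-1, 1]` and the cutoff regions do not overlap, near each endpoint every
bell involved reduces to the single ramp at that endpoint. Hence the folds at `α_I` and `α'_J`
agree for `I` (resp. `J`) and `I ∪ J`, the odd fold of `I` at `α'_I` cancels the even fold of
`J` there, and `b_I² + b_J² = b_{I∪J}²` is `ρ(t)² + ρ(-t)² = 1` on the cutoff region at `α'_I`.
-/

open MeasureTheory

/-- The bell function `b_I(ξ) = ρ((ξ − α)/ε) ρ((α' − ξ)/ε')`. -/
noncomputable def bellFn (ρ : ℝ → ℝ) (α α' ε ε' : ℝ) (ξ : ℝ) : ℝ :=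
  ρ ((ξ - α) / ε) * ρ ((α' - ξ) / ε')

/-- The action of `𝒫_I` on the Fourier side. -/
noncomputable def bellProjection (ρ : ℝ → ℝ) (α α' ε ε' : ℝ) (g : ℝ → ℂ) (ξ : ℝ) : ℂ :=
  (bellFn ρ α α' ε ε' ξ : ℂ) *
    ((bellFn ρ α α' ε ε' ξ : ℂ) * g ξ +
      (bellFn ρ α α' ε ε' (2 * α - ξ) : ℂ) * g (2 * α - ξ) -
      (bellFn ρ α α' ε ε' (2 * α' - ξ) : ℂ) * g (2 * α' - ξ))

section Bell

variable {ρ : ℝ → ℝ} {α α' ε ε' ξ : ℝ}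

lemma bellFn_eq_zero_of_le_sub (hρneg : ∀ x, x ≤ -1 → ρ x = 0) (hε : 0 < ε)
    (hξ : ξ ≤ α - ε) : bellFn ρ α α' ε ε' ξ = 0 := by
  rw [bellFn, hρneg _ (by rw [div_le_iff₀ hε]; linarith), zero_mul]

lemma bellFn_eq_zero_of_add_le (hρneg : ∀ x, x ≤ -1 → ρ x = 0) (hε' : 0 < ε')
    (hξ : α' + ε' ≤ ξ) : bellFn ρ α α' ε ε' ξ = 0 := by
  rw [bellFn, hρneg ((α' - ξ) / ε') (by rw [div_le_iff₀ hε']; linarith), mul_zero]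

lemma bellFn_eq_of_le_sub (hρpos : ∀ x, 1 ≤ x → ρ x = 1) (hε' : 0 < ε')
    (hξ : ξ ≤ α' - ε') : bellFn ρ α α' ε ε' ξ = ρ ((ξ - α) / ε) := by
  rw [bellFn, hρpos ((α' - ξ) / ε') (by rw [le_div_iff₀ hε']; linarith), mul_one]

lemma bellFn_eq_of_add_le (hρpos : ∀ x, 1 ≤ x → ρ x = 1) (hε : 0 < ε)
    (hξ : α + ε ≤ ξ) : bellFn ρ α α' ε ε' ξ = ρ ((α' - ξ) / ε') := by
  rw [bellFn, hρpos _ (by rw [le_div_iff₀ hε]; linarith), one_mul]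

variable (hρneg : ∀ x, x ≤ -1 → ρ x = 0) (hρpos : ∀ x, 1 ≤ x → ρ x = 1)
include hρneg hρpos

lemma bellFn_mul_bellFn_reflect_left (hε : 0 < ε) (hε' : 0 < ε') (hαα' : ε + ε' ≤ α' - α) :
    bellFn ρ α α' ε ε' ξ * bellFn ρ α α' ε ε' (2 * α - ξ)
      = ρ ((ξ - α) / ε) * ρ ((α - ξ) / ε) := by
  rcases le_or_gt ξ (α - ε) with hξ | hξ
  · rw [bellFn_eq_zero_of_le_sub hρneg hε hξ, hρneg _ (by rw [div_le_iff₀ hε]; linarith)]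
    ring
  rcases le_or_gt (α + ε) ξ with hξ' | hξ'
  · rw [bellFn_eq_zero_of_le_sub hρneg hε (by linarith : 2 * α - ξ ≤ α - ε),
      hρneg ((α - ξ) / ε) (by rw [div_le_iff₀ hε]; linarith)]
    ring
  rw [bellFn_eq_of_le_sub hρpos hε' (by linarith), bellFn_eq_of_le_sub hρpos hε' (by linarith),
    show 2 * α - ξ - α = α - ξ by ring]

lemma bellFn_mul_bellFn_reflect_right (hε : 0 < ε) (hε' : 0 < ε') (hαα' : ε + ε' ≤ α' - α) :
    bellFn ρ α α' ε ε' ξ * bellFn ρ α α' ε ε' (2 * α' - ξ)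
      = ρ ((α' - ξ) / ε') * ρ ((ξ - α') / ε') := by
  rcases le_or_gt ξ (α' - ε') with hξ | hξ
  · rw [bellFn_eq_zero_of_add_le hρneg hε' (by linarith : α' + ε' ≤ 2 * α' - ξ),
      hρneg ((ξ - α') / ε') (by rw [div_le_iff₀ hε']; linarith)]
    ring
  rcases le_or_gt (α' + ε') ξ with hξ' | hξ'
  · rw [bellFn_eq_zero_of_add_le hρneg hε' hξ', hρneg _ (by rw [div_le_iff₀ hε']; linarith)]
    ring
  rw [bellFn_eq_of_add_le hρpos hε (by linarith), bellFn_eq_of_add_le hρpos hε (by linarith),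
    show α' - (2 * α' - ξ) = ξ - α' by ring]

end Bell

section Adjacent

variable {ρ : ℝ → ℝ} (hρneg : ∀ x, x ≤ -1 → ρ x = 0) (hρpos : ∀ x, 1 ≤ x → ρ x = 1)
  {α β γ ε δ η : ℝ} (hε : 0 < ε) (hδ : 0 < δ) (hη : 0 < η)
  (hαβ : ε + δ ≤ β - α) (hβγ : δ + η ≤ γ - β)
include hρneg hρpos hε hδ hη hαβ hβγ

lemma bellFn_sq_add_bellFn_sq (hρsq : ∀ x, ρ x ^ 2 + ρ (-x) ^ 2 = 1) (ξ : ℝ) :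
    bellFn ρ α β ε δ ξ ^ 2 + bellFn ρ β γ δ η ξ ^ 2 = bellFn ρ α γ ε η ξ ^ 2 := by
  rcases le_or_gt ξ (β - δ) with hξ | hξ
  · rw [bellFn_eq_zero_of_le_sub hρneg hδ hξ, bellFn_eq_of_le_sub hρpos hδ hξ,
      bellFn_eq_of_le_sub hρpos hη (by linarith)]
    ring
  rcases le_or_gt (β + δ) ξ with hξ' | hξ'
  · rw [bellFn_eq_zero_of_add_le hρneg hδ hξ', bellFn_eq_of_add_le hρpos hδ hξ',
      bellFn_eq_of_add_le hρpos hε (by linarith)]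
    ring
  rw [bellFn_eq_of_add_le hρpos hε (by linarith), bellFn_eq_of_le_sub hρpos hη (by linarith),
    bellFn, hρpos ((ξ - α) / ε) (by rw [le_div_iff₀ hε]; linarith),
    hρpos ((γ - ξ) / η) (by rw [le_div_iff₀ hη]; linarith)]
  have hρsq_ξ := hρsq ((β - ξ) / δ)
  rw [← neg_div, neg_sub] at hρsq_ξ
  linear_combination hρsq_ξ

lemma bellProjection_add_bellProjection (hρsq : ∀ x, ρ x ^ 2 + ρ (-x) ^ 2 = 1)
    (g : ℝ → ℂ) (ξ : ℝ) :
    bellProjection ρ α β ε δ g ξ + bellProjection ρ β γ δ η g ξ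
      = bellProjection ρ α γ ε η g ξ := by
  have hαγ : ε + η ≤ γ - α := by linarith
  have hsq := bellFn_sq_add_bellFn_sq hρneg hρpos hε hδ hη hαβ hβγ hρsq ξ
  have hleft : bellFn ρ α β ε δ ξ * bellFn ρ α β ε δ (2 * α - ξ)
      = bellFn ρ α γ ε η ξ * bellFn ρ α γ ε η (2 * α - ξ) := by
    rw [bellFn_mul_bellFn_reflect_left hρneg hρpos hε hδ hαβ,
      bellFn_mul_bellFn_reflect_left hρneg hρpos hε hη hαγ]
  have hright : bellFn ρ β γ δ η ξ * bellFn ρ β γ δ η (2 * γ - ξ)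
      = bellFn ρ α γ ε η ξ * bellFn ρ α γ ε η (2 * γ - ξ) := by
    rw [bellFn_mul_bellFn_reflect_right hρneg hρpos hδ hη hβγ,
      bellFn_mul_bellFn_reflect_right hρneg hρpos hε hη hαγ]
  have hmid : bellFn ρ α β ε δ ξ * bellFn ρ α β ε δ (2 * β - ξ)
      = bellFn ρ β γ δ η ξ * bellFn ρ β γ δ η (2 * β - ξ) := by
    rw [bellFn_mul_bellFn_reflect_right hρneg hρpos hε hδ hαβ,
      bellFn_mul_bellFn_reflect_left hρneg hρpos hδ hη hβγ, mul_comm]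
  simp only [bellProjection]
  apply_fun ((↑) : ℝ → ℂ) at hsq hleft hright hmid
  push_cast at hsq hleft hright hmid
  linear_combination g ξ * hsq + g (2 * α - ξ) * hleft - g (2 * γ - ξ) * hright
    - g (2 * β - ξ) * hmid

end Adjacent

theorem stmt15_general (ρ : ℝ → ℝ)
    (hρneg : ∀ ξ, ξ ≤ -1 → ρ ξ = 0) (hρpos : ∀ ξ, 1 ≤ ξ → ρ ξ = 1)
    (hρsq : ∀ ξ, ρ ξ ^ 2 + ρ (-ξ) ^ 2 = 1)
    (αI αI' αJ' : ℝ)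
    (εI εI' εJ' : ℝ) (hεI : 0 < εI) (hεI' : 0 < εI') (hεJ' : 0 < εJ')
    (hsumI : εI + εI' ≤ αI' - αI) (hsumJ : εI' + εJ' ≤ αJ' - αI')
    (F : Lp ℂ 2 (volume : Measure ℝ) ≃ₗᵢ[ℂ] Lp ℂ 2 (volume : Measure ℝ))
    (PI PJ PIJ : Lp ℂ 2 (volume : Measure ℝ) →L[ℂ] Lp ℂ 2 (volume : Measure ℝ))
    (hPI : ∀ f : Lp ℂ 2 (volume : Measure ℝ),
      (F (PI f) : ℝ → ℂ) =ᵐ[volume] fun ξ =>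
        (bellFn ρ αI αI' εI εI' ξ : ℂ) *
          ((bellFn ρ αI αI' εI εI' ξ : ℂ) * (F f : ℝ → ℂ) ξ +
            (bellFn ρ αI αI' εI εI' (2 * αI - ξ) : ℂ) * (F f : ℝ → ℂ) (2 * αI - ξ) -
            (bellFn ρ αI αI' εI εI' (2 * αI' - ξ) : ℂ) * (F f : ℝ → ℂ) (2 * αI' - ξ)))
    (hPJ : ∀ f : Lp ℂ 2 (volume : Measure ℝ),
      (F (PJ f) : ℝ → ℂ) =ᵐ[volume] fun ξ =>
        (bellFn ρ αI' αJ' εI' εJ' ξ : ℂ) *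
          ((bellFn ρ αI' αJ' εI' εJ' ξ : ℂ) * (F f : ℝ → ℂ) ξ +
            (bellFn ρ αI' αJ' εI' εJ' (2 * αI' - ξ) : ℂ) * (F f : ℝ → ℂ) (2 * αI' - ξ) -
            (bellFn ρ αI' αJ' εI' εJ' (2 * αJ' - ξ) : ℂ) * (F f : ℝ → ℂ) (2 * αJ' - ξ)))
    (hPIJ : ∀ f : Lp ℂ 2 (volume : Measure ℝ),
      (F (PIJ f) : ℝ → ℂ) =ᵐ[volume] fun ξ =>
        (bellFn ρ αI αJ' εI εJ' ξ : ℂ) *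
          ((bellFn ρ αI αJ' εI εJ' ξ : ℂ) * (F f : ℝ → ℂ) ξ +
            (bellFn ρ αI αJ' εI εJ' (2 * αI - ξ) : ℂ) * (F f : ℝ → ℂ) (2 * αI - ξ) -
            (bellFn ρ αI αJ' εI εJ' (2 * αJ' - ξ) : ℂ) * (F f : ℝ → ℂ) (2 * αJ' - ξ))) :
    PI + PJ = PIJ := by
  refine ContinuousLinearMap.ext fun f => F.injective <| Lp.ext ?_
  filter_upwards [Lp.coeFn_add (F (PI f)) (F (PJ f)), hPI f, hPJ f, hPIJ f]
    with ξ hadd hIξ hJξ hIJξ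
  rw [add_apply, map_add, hadd, Pi.add_apply, hIξ, hJξ, hIJξ]
  exact bellProjection_add_bellProjection hρneg hρpos hεI hεI' hεJ' hsumI hsumJ hρsq (F f) ξ

/-- Let `I = [αI, αI')` and `J = [αI', αJ')` be adjacent intervals
with compatible cutoff radii.  With `F` the Fourier transform (a unitary of `L²(ℝ;ℂ)`
characterized by the usual integral formula on integrable functions), and `P_I`, `P_J`,
`P_{I∪J}` the operators defined on the Fourier side by the bell-function formula —
where `I ∪ J = [αI, αJ')` carries the cutoff radii `εI` and `ε'J` — one has
`𝒫_I + 𝒫_J = 𝒫_{I∪J}` as operators on `L²(ℝ; ℂ)`. -/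
theorem stmt15 (ρ : ℝ → ℝ) (hρsmooth : ∀ m : ℕ, ContDiff ℝ m ρ)
    (hρ0 : ∀ ξ, 0 ≤ ρ ξ) (hρ1 : ∀ ξ, ρ ξ ≤ 1)
    (hρneg : ∀ ξ, ξ ≤ -1 → ρ ξ = 0) (hρpos : ∀ ξ, 1 ≤ ξ → ρ ξ = 1)
    (hρsq : ∀ ξ, ρ ξ ^ 2 + ρ (-ξ) ^ 2 = 1)
    (αI αI' αJ' : ℝ) (hI : αI < αI') (hJ : αI' < αJ')
    (εI εI' εJ' : ℝ) (hεI : 0 < εI) (hεI' : 0 < εI') (hεJ' : 0 < εJ')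
    (hsumI : εI + εI' ≤ αI' - αI) (hsumJ : εI' + εJ' ≤ αJ' - αI')
    (F : Lp ℂ 2 (volume : Measure ℝ) ≃ₗᵢ[ℂ] Lp ℂ 2 (volume : Measure ℝ))
    (hF : ∀ f : Lp ℂ 2 (volume : Measure ℝ), Integrable (⇑f) volume →
      (F f : ℝ → ℂ) =ᵐ[volume] fun ξ =>
        ((Real.sqrt (2 * Real.pi))⁻¹ : ℂ) *
          ∫ x : ℝ, f x * Complex.exp (-(Complex.I * x * ξ)))
    (PI PJ PIJ : Lp ℂ 2 (volume : Measure ℝ) →L[ℂ] Lp ℂ 2 (volume : Measure ℝ))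
    (hPI : ∀ f : Lp ℂ 2 (volume : Measure ℝ),
      (F (PI f) : ℝ → ℂ) =ᵐ[volume] fun ξ =>
        (bellFn ρ αI αI' εI εI' ξ : ℂ) *
          ((bellFn ρ αI αI' εI εI' ξ : ℂ) * (F f : ℝ → ℂ) ξ +
            (bellFn ρ αI αI' εI εI' (2 * αI - ξ) : ℂ) * (F f : ℝ → ℂ) (2 * αI - ξ) -
            (bellFn ρ αI αI' εI εI' (2 * αI' - ξ) : ℂ) * (F f : ℝ → ℂ) (2 * αI' - ξ)))
    (hPJ : ∀ f : Lp ℂ 2 (volume : Measure ℝ),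
      (F (PJ f) : ℝ → ℂ) =ᵐ[volume] fun ξ =>
        (bellFn ρ αI' αJ' εI' εJ' ξ : ℂ) *
          ((bellFn ρ αI' αJ' εI' εJ' ξ : ℂ) * (F f : ℝ → ℂ) ξ +
            (bellFn ρ αI' αJ' εI' εJ' (2 * αI' - ξ) : ℂ) * (F f : ℝ → ℂ) (2 * αI' - ξ) -
            (bellFn ρ αI' αJ' εI' εJ' (2 * αJ' - ξ) : ℂ) * (F f : ℝ → ℂ) (2 * αJ' - ξ)))
    (hPIJ : ∀ f : Lp ℂ 2 (volume : Measure ℝ),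
      (F (PIJ f) : ℝ → ℂ) =ᵐ[volume] fun ξ =>
        (bellFn ρ αI αJ' εI εJ' ξ : ℂ) *
          ((bellFn ρ αI αJ' εI εJ' ξ : ℂ) * (F f : ℝ → ℂ) ξ +
            (bellFn ρ αI αJ' εI εJ' (2 * αI - ξ) : ℂ) * (F f : ℝ → ℂ) (2 * αI - ξ) -
            (bellFn ρ αI αJ' εI εJ' (2 * αJ' - ξ) : ℂ) * (F f : ℝ → ℂ) (2 * αJ' - ξ))) :
    PI + PJ = PIJ :=
  stmt15_general ρ hρneg hρpos hρsq αI αI' αJ' εI εI' εJ' hεI hεI' hεJ' hsumI hsumJ F PI PJ PIJ hPI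
    hPJ hPIJ
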